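/- Let θ be an ordinal and let (f_α)_{α<θ} and (g_α)_{α<θ} be two sequences of functions ω₁ → Ordinal such that for each α < θ, f_α is a minimal upper bound in the club order of {f_β : β < α} and g_α is a minimal upper bound in the club order of {g_β : β < α} (i.e. both are sequences of canonical functions). Then for every α < θ, the set {ξ < ω₁ : f_α(ξ) = g_α(ξ)} contains a closed unbounded subset of ω₁. -/

import Mathlib

/-!
By induction on `α`: if `f β` and `g β` agree on a club for every `β < α`, then `g α` is an upper
bound of the `f β` and `f α` one of the `g β` in the club order, so minimality gives
`f α ≤ g α ≤ f α` on a club. All of this club-almost-everywhere reasoning rests on the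
intersection of two clubs being a club, which is seen by interleaving ω-sequences from both.
-/

open scoped Ordinal Cardinal

/-- A set of countable ordinals is a *club* (closed unbounded subset of `ω₁`) if it consists of
ordinals `< ω₁`, is unbounded in `ω₁`, and contains the supremum of each of its nonempty
subsets that are bounded below `ω₁`. -/
def IsClub' (C : Set Ordinal) : Prop :=
  C ⊆ Set.Iio ω₁ ∧
  (∀ ξ < ω₁, ∃ η ∈ C, ξ ≤ η) ∧
  (∀ S : Set Ordinal, S ⊆ C → S.Nonempty → (∃ η < ω₁, ∀ ξ ∈ S, ξ ≤ η) → sSup S ∈ C)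

/-- A set of ordinals contains a club of `ω₁`. -/
def ContainsClub (A : Set Ordinal) : Prop :=
  ∃ C : Set Ordinal, IsClub' C ∧ C ⊆ A

/-- `f <club g` : the set of `ξ < ω₁` with `f ξ < g ξ` contains a club. -/
def ClubLT (f g : Ordinal → Ordinal) : Prop :=
  ContainsClub {ξ | ξ < ω₁ ∧ f ξ < g ξ}

/-- `f ≤club g` : the set of `ξ < ω₁` with `f ξ ≤ g ξ` contains a club. -/
def ClubLE (f g : Ordinal → Ordinal) : Prop :=
  ContainsClub {ξ | ξ < ω₁ ∧ f ξ ≤ g ξ}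

/-- A set of countable ordinals is *stationary* if it meets every club of `ω₁`. -/
def IsStationary' (S : Set Ordinal) : Prop :=
  ∀ C : Set Ordinal, IsClub' C → (S ∩ C).Nonempty

theorem ciSup_eq_ciSup_of_interleave {α : Type*} [ConditionallyCompleteLattice α] {u v : ℕ → α}
    (hu : BddAbove (Set.range u)) (hv : BddAbove (Set.range v))
    (huv : ∀ n, u n ≤ v n) (hvu : ∀ n, v n ≤ u (n + 1)) : ⨆ n, u n = ⨆ n, v n :=
  le_antisymm (ciSup_mono hv huv) (ciSup_le fun n => (hvu n).trans (le_ciSup hu (n + 1)))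

namespace IsClub'

variable {C D : Set Ordinal}

theorem lt_omega_one (hC : IsClub' C) {ξ : Ordinal} (hξ : ξ ∈ C) : ξ < ω₁ :=
  hC.1 hξ

theorem exists_next (hC : IsClub' C) :
    ∃ next : Ordinal → Ordinal, ∀ ξ < ω₁, next ξ ∈ C ∧ ξ ≤ next ξ := by
  choose! next hnext using hC.2.1
  exact ⟨next, hnext⟩

theorem iSup_mem (hC : IsClub' C) {s : ℕ → Ordinal} (hs : ∀ n, s n ∈ C) : ⨆ n, s n ∈ C :=
  hC.2.2 _ (Set.range_subset_iff.2 hs) (Set.range_nonempty s)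
    ⟨_, Ordinal.iSup_lt_omega_one fun n => hC.lt_omega_one (hs n),
      Set.forall_mem_range.2 (le_ciSup Ordinal.bddAbove_of_small)⟩

theorem inter (hC : IsClub' C) (hD : IsClub' D) : IsClub' (C ∩ D) := by
  refine ⟨fun ξ hξ => hC.lt_omega_one hξ.1, fun ξ hξ => ?_, fun S hS hne hbdd =>
    ⟨hC.2.2 S (fun _ h => (hS h).1) hne hbdd, hD.2.2 S (fun _ h => (hS h).2) hne hbdd⟩⟩
  obtain ⟨c, hc⟩ := hC.exists_next
  obtain ⟨d, hd⟩ := hD.exists_next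
  have hc_lt (η : Ordinal) (hη : η < ω₁) : c η < ω₁ := hC.lt_omega_one (hc η hη).1
  let s : ℕ → Ordinal := fun n => (d ∘ c)^[n] ξ
  have hs_succ (n : ℕ) : s (n + 1) = d (c (s n)) := Function.iterate_succ_apply' _ _ _
  have hs_lt (n : ℕ) : s n < ω₁ := by
    induction n with
    | zero => exact hξ
    | succ n ih => rw [hs_succ]; exact hD.lt_omega_one (hd _ (hc_lt _ ih)).1
  have hsup : ⨆ n, c (s n) = ⨆ n, d (c (s n)) :=
    ciSup_eq_ciSup_of_interleave Ordinal.bddAbove_of_small Ordinal.bddAbove_of_small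
      (fun n => (hd _ (hc_lt _ (hs_lt n))).2)
      (fun n => by rw [← hs_succ]; exact (hc _ (hs_lt _)).2)
  refine ⟨⨆ n, c (s n), ⟨hC.iSup_mem fun n => (hc _ (hs_lt n)).1, ?_⟩, ?_⟩
  · rw [hsup]
    exact hD.iSup_mem fun n => (hd _ (hc_lt _ (hs_lt n))).1
  · exact (hc ξ hξ).2.trans (le_ciSup Ordinal.bddAbove_of_small 0)

end IsClub'

namespace ContainsClub

variable {A B : Set Ordinal}

theorem mono (hA : ContainsClub A) (hAB : A ⊆ B) : ContainsClub B :=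
  let ⟨C, hC, hCA⟩ := hA
  ⟨C, hC, hCA.trans hAB⟩

theorem inter (hA : ContainsClub A) (hB : ContainsClub B) : ContainsClub (A ∩ B) :=
  let ⟨C, hC, hCA⟩ := hA
  let ⟨D, hD, hDB⟩ := hB
  ⟨C ∩ D, hC.inter hD, Set.inter_subset_inter hCA hDB⟩

end ContainsClub

variable {f f' g : Ordinal → Ordinal}

theorem containsClub_eq_symm (h : ContainsClub {ξ | ξ < ω₁ ∧ f ξ = g ξ}) :
    ContainsClub {ξ | ξ < ω₁ ∧ g ξ = f ξ} :=
  h.mono fun _ ⟨hξ, heq⟩ => ⟨hξ, heq.symm⟩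

theorem ClubLT.congr_left (h : ClubLT f g) (hff' : ContainsClub {ξ | ξ < ω₁ ∧ f ξ = f' ξ}) :
    ClubLT f' g :=
  (h.inter hff').mono fun _ ⟨⟨hξ, hlt⟩, _, heq⟩ => ⟨hξ, heq ▸ hlt⟩

theorem ClubLE.antisymm (hfg : ClubLE f g) (hgf : ClubLE g f) :
    ContainsClub {ξ | ξ < ω₁ ∧ f ξ = g ξ} :=
  (hfg.inter hgf).mono fun _ ⟨⟨hξ, hle⟩, _, hge⟩ => ⟨hξ, le_antisymm hle hge⟩

/-- Two sequences of canonical functions agree levelwise on clubs: if for each `α < θ`,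
`f α` is a minimal upper bound of `{f β : β < α}` and `g α` is a minimal upper bound of
`{g β : β < α}` in the club order, then `{ξ < ω₁ : f α ξ = g α ξ}` contains a club. -/
theorem stmt2 (θ : Ordinal) (f g : Ordinal → Ordinal → Ordinal)
    (hfU : ∀ α < θ, ∀ β < α, ClubLT (f β) (f α))
    (hfmin : ∀ α < θ, ∀ h : Ordinal → Ordinal, (∀ β < α, ClubLT (f β) h) → ClubLE (f α) h)
    (hgU : ∀ α < θ, ∀ β < α, ClubLT (g β) (g α))
    (hgmin : ∀ α < θ, ∀ h : Ordinal → Ordinal, (∀ β < α, ClubLT (g β) h) → ClubLE (g α) h) :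
    ∀ α < θ, ContainsClub {ξ | ξ < ω₁ ∧ f α ξ = g α ξ} := by
  intro α
  induction α using WellFoundedLT.induction with
  | _ α IH =>
    intro hα
    have hfg (β : Ordinal) (hβ : β < α) : ClubLT (f β) (g α) :=
      (hgU α hα β hβ).congr_left (containsClub_eq_symm (IH β hβ (hβ.trans hα)))
    have hgf (β : Ordinal) (hβ : β < α) : ClubLT (g β) (f α) :=
      (hfU α hα β hβ).congr_left (IH β hβ (hβ.trans hα))
    exact (hfmin α hα (g α) hfg).antisymm (hgmin α hα (f α) hgf)
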